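/- Let L be an LTS, ψ a conjunction-free formula in canonical form, ρ a run of L, and k ≥ |S| + 1 such that (ρ,k) ⊭ F_p^∞ ψ. Then there exists a ψ-avoiding sequence that is realized by ρ. -/

import Mathlib

open scoped Classical
open MeasureTheory

/-- A labelled transition system: a finite set of states `S`, an initial state,
a transition relation in which every state has at least one successor, and a
labeling of states by sets of atomic propositions. -/
structure LTS (S AP : Type) where
  init : S
  T : S → S → Prop
  lbl : S → Set AP
  succ_nonempty : ∀ s : S, ∃ t : S, T s t

variable {S AP : Type}

/-- A run of an LTS: an infinite sequence of states following the transitions. -/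
def IsRun (L : LTS S AP) (ρ : ℕ → S) : Prop := ∀ i : ℕ, L.T (ρ i) (ρ (i + 1))

/-- The shifted run `ρ[i..]`. -/
def shift (ρ : ℕ → S) (i : ℕ) : ℕ → S := fun n => ρ (n + i)

/-- A state formula: a (possibly empty, i.e. `false`) disjunction of literals,
each literal being a polarity (`true` = positive) paired with an atomic proposition. -/
abbrev StateFormula (AP : Type) := List (Bool × AP)

/-- A state `s` satisfies a state formula `θ`. -/
def SatState (L : LTS S AP) (θ : StateFormula AP) (s : S) : Prop :=
  ∃ p ∈ θ, if p.1 then p.2 ∈ L.lbl s else p.2 ∉ L.lbl s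

/-- A conjunction-free formula in canonical form `ψ = θ ∨ ⋁ F_p^∞ ψᵢ`, identified
with its tree `T(ψ)`: a root labeled by the state formula `θ` whose children are
the trees of the `ψᵢ`. -/
inductive CTree (AP : Type) : Type where
  | node : StateFormula AP → List (CTree AP) → CTree AP

/-- Satisfaction `(ρ, k) ⊨ ψ` for a canonical conjunction-free formula
`ψ = θ ∨ ⋁ F_p^∞ ψᵢ`. -/
def SatC (L : LTS S AP) : CTree AP → (ℕ → S) → ℕ → Prop
  | .node θ cs, ρ, k =>
      SatState L θ (ρ 0) ∨
      ∃ c ∈ cs.attach, ∀ i : ℕ, ∃ j ≤ k, SatC L c.1 (shift ρ (i + j)) k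
termination_by t => sizeOf t
decreasing_by
  have := List.sizeOf_lt_of_mem c.2
  simp only [CTree.node.sizeOf_spec]
  omega

/-- Satisfaction `(ρ, k) ⊨ F_p^∞ ψ` for a canonical conjunction-free formula `ψ`. -/
def SatFinfC (L : LTS S AP) (t : CTree AP) (ρ : ℕ → S) (k : ℕ) : Prop :=
  ∀ i : ℕ, ∃ j ≤ k, SatC L t (shift ρ (i + j)) k

/-- `Interleave l₁ l₂ l`: `l` is an interleaving (shuffle) of `l₁` and `l₂`. -/
inductive Interleave {α : Type} : List α → List α → List α → Prop where
  | nil : Interleave [] [] []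
  | left {a : α} {l₁ l₂ l : List α} : Interleave l₁ l₂ l → Interleave (a :: l₁) l₂ (a :: l)
  | right {a : α} {l₁ l₂ l : List α} : Interleave l₁ l₂ l → Interleave l₁ (a :: l₂) (a :: l)

mutual
/-- `LinExt t l`: the list `l` of state-formula labels enumerates the nodes of the
tree `t` in a linear order extending the ancestor order of the tree (the root comes
first, followed by an interleaving of linear extensions of the children's subtrees). -/
inductive LinExt {AP : Type} : CTree AP → List (StateFormula AP) → Prop where
  | node {θ : StateFormula AP} {cs : List (CTree AP)} {l : List (StateFormula AP)} :
      LinExtF cs l → LinExt (.node θ cs) (θ :: l)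

/-- Linear extensions of a forest: interleavings of linear extensions of its trees. -/
inductive LinExtF {AP : Type} : List (CTree AP) → List (StateFormula AP) → Prop where
  | nil : LinExtF [] []
  | cons {t : CTree AP} {ts : List (CTree AP)} {l₁ l₂ l : List (StateFormula AP)} :
      LinExt t l₁ → LinExtF ts l₂ → Interleave l₁ l₂ l → LinExtF (t :: ts) l
end

/-- A (nonempty) finite path of the LTS. -/
def IsPath (L : LTS S AP) (u : List S) : Prop := u ≠ [] ∧ u.Chain' L.T

/-- A loop: a finite path with at least one transition whose first and last states coincide. -/
def IsLoop (L : LTS S AP) (u : List S) : Prop :=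
  2 ≤ u.length ∧ u.Chain' L.T ∧ u.head? = u.getLast?

/-- The set `occ u` of states occurring in a finite sequence. -/
def occ (u : List S) : Set S := {s | s ∈ u}

/-- A `ψ`-avoiding sequence: a linear ordering of the nodes of `T(ψ)` extending the
ancestor order together with, for each node labeled by a state formula `θ`, a loop
whose set of states is a `θ`-avoiding cycle. -/
structure AvoidingSeq (L : LTS S AP) (ψ : CTree AP) where
  labels : List (StateFormula AP)
  loops : List (List S)
  linext : LinExt ψ labels
  length_eq : loops.length = labels.length
  isLoop : ∀ u ∈ loops, IsLoop L u
  avoid : ∀ p ∈ loops.zip labels, ∀ s ∈ p.1, ¬ SatState L p.2 s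

/-- A run `ρ` realizes an avoiding sequence `U = u₀, …, u_l`: there are positions
`j₀ ≤ j₁ ≤ … ≤ j_l` with `ρ (jᵢ) ∈ occ uᵢ` for every `i`. -/
def RealizedBy {L : LTS S AP} {ψ : CTree AP} (U : AvoidingSeq L ψ) (ρ : ℕ → S) : Prop :=
  ∃ j : ℕ → ℕ, Monotone j ∧ ∀ i : Fin U.loops.length, ρ (j i) ∈ occ (U.loops.get i)

/-! If `(ρ, k) ⊭ F_p^∞ ψ` with `ψ = θ ∨ ⋁ F_p^∞ ψᵢ`, some window of `k + 1` consecutive positions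
contains no position satisfying `ψ`: no state in it satisfies `θ`, and at its last position every
`F_p^∞ ψᵢ` fails. As `k > |S|`, a state repeats inside the window, which yields a `θ`-avoiding
loop visited there. Recursing on the children from the end of the window gives their loops at
later positions, and merging the children's sequences by position produces a linear extension
of `T(ψ)` whose loops `ρ` visits in order. -/

theorem Interleave.map {α β : Type} (g : α → β) {l₁ l₂ l : List α}
    (h : Interleave l₁ l₂ l) : Interleave (l₁.map g) (l₂.map g) (l.map g) := by
  induction h with
  | nil => exact .nil
  | left _ ih => exact .left ih
  | right _ ih => exact .right ih

theorem Interleave.nil_left {α : Type} (l : List α) : Interleave [] l l := by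
  induction l with
  | nil => exact .nil
  | cons _ _ ih => exact .right ih

theorem Interleave.nil_right {α : Type} (l : List α) : Interleave l [] l := by
  induction l with
  | nil => exact .nil
  | cons _ _ ih => exact .left ih

theorem interleave_merge {α : Type} (l₁ l₂ : List α) (le : α → α → Bool) :
    Interleave l₁ l₂ (l₁.merge l₂ le) := by
  fun_induction List.merge l₁ l₂ le with
  | case1 => exact Interleave.nil_left _
  | case2 => exact Interleave.nil_right _
  | case3 => exact .left ‹_›
  | case4 => exact .right ‹_›

theorem List.Pairwise.exists_monotone_getElem {α : Type} [Preorder α] [Nonempty α] {l : List α}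
    (h : l.Pairwise (· ≤ ·)) : ∃ j : ℕ → α, Monotone j ∧ ∀ i (hi : i < l.length), j i = l[i] := by
  obtain rfl | hne := eq_or_ne l []
  · exact ⟨fun _ => Classical.arbitrary α, fun _ _ _ => le_rfl, by simp⟩
  have hlen : 0 < l.length := List.length_pos_iff.2 hne
  refine ⟨fun n => l[min n (l.length - 1)], fun n m hnm => ?_, fun i hi => ?_⟩
  · exact (List.sortedLE_iff_pairwise.2 h).monotone_get (Fin.mk_le_mk.2 (min_le_min_right _ hnm))
  · simp only [min_eq_left (Nat.le_sub_one_of_lt hi)]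

section Runs

variable {L : LTS S AP} {ρ : ℕ → S}

theorem shift_shift (ρ : ℕ → S) (a b : ℕ) : shift (shift ρ a) b = shift ρ (b + a) := by
  funext n
  simp only [shift, Nat.add_assoc]

theorem exists_lt_le_card_apply_eq [Fintype S] (f : ℕ → S) :
    ∃ i j, i < j ∧ j ≤ Fintype.card S ∧ f i = f j := by
  obtain ⟨a, b, hne, heq⟩ := Fintype.exists_ne_map_eq_of_card_lt
    (fun a : Fin (Fintype.card S + 1) => f a) (by simp)
  rcases lt_or_gt_of_ne hne with hlt | hlt
  · exact ⟨a, b, hlt, by omega, heq⟩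
  · exact ⟨b, a, hlt, by omega, heq.symm⟩

theorem IsRun.isLoop_segment (hρ : IsRun L ρ) {i j : ℕ} (hij : i < j) (heq : ρ i = ρ j) :
    IsLoop L ((List.range' i (j - i + 1)).map ρ) := by
  refine ⟨by simp; omega, ?_, ?_⟩
  · exact (List.isChain_map ρ).2 <|
      (List.isChain_range' i _ 1).imp fun a _ h => by rw [h]; exact hρ a
  · simp [List.head?_range', List.getLast?_range', heq, show i + (j - i + 1) - 1 = j by omega]

theorem IsRun.exists_loop_within [Fintype S] (hρ : IsRun L ρ) (A : ℕ) :
    ∃ j ≤ Fintype.card S, ∃ u, IsLoop L u ∧ ρ (A + j) ∈ u ∧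
      ∀ s ∈ u, ∃ m ≤ Fintype.card S, s = ρ (A + m) := by
  obtain ⟨i, j, hij, hj, heq⟩ := exists_lt_le_card_apply_eq (fun n => ρ (A + n))
  refine ⟨i, by omega, _, hρ.isLoop_segment (by omega : A + i < A + j) heq, ?_, ?_⟩
  · exact List.mem_map.2 ⟨A + i, List.mem_range'_1.2 ⟨le_rfl, by omega⟩, rfl⟩
  · simp only [List.mem_map, List.mem_range'_1]
    rintro _ ⟨n, ⟨hn₁, hn₂⟩, rfl⟩
    exact ⟨n - A, by omega, by rw [Nat.add_sub_cancel' (by omega)]⟩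

theorem exists_window_of_not_satFinfC {θ : StateFormula AP} {cs : List (CTree AP)} {N k : ℕ}
    (h : ¬ SatFinfC L (.node θ cs) (shift ρ N) k) :
    ∃ A ≥ N, ∀ j ≤ k, ¬ SatState L θ (ρ (A + j)) ∧
      ∀ c ∈ cs, ¬ SatFinfC L c (shift ρ (A + j)) k := by
  simp only [SatFinfC, not_forall, not_exists, not_and] at h
  obtain ⟨i, hi⟩ := h
  refine ⟨N + i, by omega, fun j hj => ?_⟩
  have hwin := hi j hj
  rw [shift_shift, SatC, not_or, show i + j + N = N + i + j by omega] at hwin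
  exact ⟨by simpa [shift] using hwin.1,
    fun c hc hsat => hwin.2 ⟨⟨c, hc⟩, List.mem_attach _ _, hsat⟩⟩

end Runs

/-- A node `n` of `T(ψ)`, through its label `θₙ`, with its loop `uₙ` and a realizing
position `jₙ`. -/
structure LoopVisit (S AP : Type) where
  label : StateFormula AP
  loop : List S
  pos : ℕ

def IsAvoidingLoop (L : LTS S AP) (θ : StateFormula AP) (u : List S) : Prop :=
  IsLoop L u ∧ ∀ s ∈ u, ¬ SatState L θ s

def LoopVisit.IsAvoiding (L : LTS S AP) (ρ : ℕ → S) (x : LoopVisit S AP) : Prop :=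
  IsAvoidingLoop L x.label x.loop ∧ ρ x.pos ∈ x.loop

section LoopVisits

variable {L : LTS S AP} {ρ : ℕ → S} {ψ : CTree AP}

theorem exists_linExtF_of_forall_linExt {P : LoopVisit S AP → Prop} (cs : List (CTree AP))
    (h : ∀ c ∈ cs, ∃ l : List (LoopVisit S AP), LinExt c (l.map (·.label)) ∧
      l.Pairwise (fun x y => x.pos ≤ y.pos) ∧ ∀ x ∈ l, P x) :
    ∃ l : List (LoopVisit S AP), LinExtF cs (l.map (·.label)) ∧
      l.Pairwise (fun x y => x.pos ≤ y.pos) ∧ ∀ x ∈ l, P x := by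
  induction cs with
  | nil => exact ⟨[], .nil, .nil, by simp⟩
  | cons c cs ih =>
    obtain ⟨l₁, hext₁, hsort₁, hP₁⟩ := h c List.mem_cons_self
    obtain ⟨l₂, hext₂, hsort₂, hP₂⟩ := ih fun c hc => h c (List.mem_cons_of_mem _ hc)
    let le : LoopVisit S AP → LoopVisit S AP → Bool := fun x y => decide (x.pos ≤ y.pos)
    refine ⟨l₁.merge l₂ le, .cons hext₁ hext₂ ((interleave_merge l₁ l₂ le).map _), ?_, ?_⟩
    · refine (List.pairwise_merge (fun a b c => ?_) (fun a b => ?_) l₁ l₂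
        (hsort₁.imp ?_) (hsort₂.imp ?_)).imp ?_ <;> simp +contextual [le] <;> omega
    · simp only [List.mem_merge]
      rintro x (hx | hx)
      exacts [hP₁ x hx, hP₂ x hx]
theorem IsRun.exists_loopVisits [Fintype S] (hρ : IsRun L ρ) {k : ℕ}
    (hk : Fintype.card S + 1 ≤ k) :
    ∀ (t : CTree AP) (N : ℕ), ¬ SatFinfC L t (shift ρ N) k →
      ∃ l : List (LoopVisit S AP), LinExt t (l.map (·.label)) ∧
        l.Pairwise (fun x y => x.pos ≤ y.pos) ∧ ∀ x ∈ l, N ≤ x.pos ∧ x.IsAvoiding L ρ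
  | .node θ cs, N, h => by
    obtain ⟨A, hNA, hwin⟩ := exists_window_of_not_satFinfC h
    obtain ⟨j, hj, u, hloop, hvisit, hwithin⟩ := hρ.exists_loop_within A
    have havoid : ∀ s ∈ u, ¬ SatState L θ s := by
      intro s hs
      obtain ⟨m, hm, rfl⟩ := hwithin s hs
      exact (hwin m (by omega)).1
    have hchildren := fun c (hc : c ∈ cs) =>
      hρ.exists_loopVisits hk c (A + k) ((hwin k le_rfl).2 c hc)
    obtain ⟨l, hext, hsort, hgood⟩ := exists_linExtF_of_forall_linExt cs hchildren
    refine ⟨⟨θ, u, A + j⟩ :: l, .node hext, hsort.cons fun x hx => ?_, ?_⟩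
    · have := (hgood x hx).1
      dsimp only
      omega
    · rintro x (_ | ⟨_, hx⟩)
      · exact ⟨show N ≤ A + j by omega, ⟨hloop, havoid⟩, hvisit⟩
      · exact ⟨by have := (hgood x hx).1; omega, (hgood x hx).2⟩
termination_by t => sizeOf t
decreasing_by
  have := List.sizeOf_lt_of_mem hc
  simp only [CTree.node.sizeOf_spec]
  omega

def AvoidingSeq.ofLoopVisits (l : List (LoopVisit S AP)) (hext : LinExt ψ (l.map (·.label)))
    (havoid : ∀ x ∈ l, IsAvoidingLoop L x.label x.loop) :
    AvoidingSeq L ψ where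
  labels := l.map (·.label)
  loops := l.map (·.loop)
  linext := hext
  length_eq := by simp
  isLoop := by
    simp only [List.mem_map]
    rintro _ ⟨x, hx, rfl⟩
    exact (havoid x hx).1
  avoid := by
    simp only [List.zip_map', List.mem_map]
    rintro _ ⟨x, hx, rfl⟩
    exact (havoid x hx).2

theorem AvoidingSeq.realizedBy_ofLoopVisits {l : List (LoopVisit S AP)}
    (hext : LinExt ψ (l.map (·.label)))
    (havoid : ∀ x ∈ l, IsAvoidingLoop L x.label x.loop)
    (hsort : l.Pairwise (fun x y => x.pos ≤ y.pos)) (hvisit : ∀ x ∈ l, ρ x.pos ∈ x.loop) :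
    RealizedBy (ofLoopVisits l hext havoid) ρ := by
  obtain ⟨j, hmono, hj⟩ := (List.pairwise_map.2 hsort).exists_monotone_getElem
  refine ⟨j, hmono, fun ⟨i, hi⟩ => ?_⟩
  have hil : i < l.length := by simpa [ofLoopVisits] using hi
  simpa [ofLoopVisits, occ, hj i (by simpa using hil)] using hvisit l[i] (List.getElem_mem hil)

end LoopVisits

/-- If `ψ` is a conjunction-free canonical formula, `ρ` a run of `L`
and `k ≥ |S| + 1` with `(ρ,k) ⊭ F_p^∞ ψ`, then there is a `ψ`-avoiding sequence
realized by `ρ`. -/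
theorem avoiding_sequence_of_counterexample [Fintype S] (L : LTS S AP) (ψ : CTree AP)
    (ρ : ℕ → S) (hρ : IsRun L ρ) (k : ℕ) (hk : Fintype.card S + 1 ≤ k)
    (h : ¬ SatFinfC L ψ ρ k) :
    ∃ U : AvoidingSeq L ψ, RealizedBy U ρ := by
  obtain ⟨l, hext, hsort, hgood⟩ := hρ.exists_loopVisits hk ψ 0 h
  exact ⟨_, AvoidingSeq.realizedBy_ofLoopVisits hext (fun x hx => (hgood x hx).2.1) hsort
    fun x hx => (hgood x hx).2.2⟩
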